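/- For every d ≥ 1, there exists a (0,1)-2d-layer full-attention score-BAPO solving the d-Hop Induction Heads problem. -/

import Mathlib

open Finset Filter Asymptotics
open scoped Classical

/-- An `(a, b)` `d`-layer full-attention score-BAPO: a prefix oracle `f`, `d`
attention functions `g j` (each taking the suffix, split index, a candidate token
with its 1-based index, and the previous layer's attended set, and outputting a
score in `[0, 1]`), and a suffix oracle `h`. Attention may select tokens from the
entire input, not only the prefix. -/
structure MLBAPO (Sigma : Type) (Out : Type) (a b d : ℕ) where
  f : List Sigma → (Fin a → Bool)
  g : Fin d → List Sigma → ℕ → Sigma → ℕ → Finset (Sigma × ℕ) → ℝ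
  g_nonneg : ∀ j suf k t i G, 0 ≤ g j suf k t i G
  g_le_one : ∀ j suf k t i G, g j suf k t i G ≤ 1
  h : (Fin a → Bool) → Finset (Sigma × ℕ) → List Sigma → ℕ → Out

namespace MLBAPO

variable {Sigma Out : Type} {a b d : ℕ}

/-- The (token, 1-based index) pairs of the whole input `x` with positive score at
layer `j`, given split index `k` and previous attended set `Gp`. -/
noncomputable def cands (M : MLBAPO Sigma Out a b d) (x : List Sigma) (k : ℕ)
    (j : Fin d) (Gp : Finset (Sigma × ℕ)) : Finset (Sigma × ℕ) :=
  (Finset.univ.filter fun i : Fin x.length =>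
      0 < M.g j (x.drop k) k (x.get i) ((i : ℕ) + 1) Gp).image
    fun i => (x.get i, (i : ℕ) + 1)

/-- Total attention score of a set `G` at layer `j`. -/
noncomputable def score (M : MLBAPO Sigma Out a b d) (x : List Sigma) (k : ℕ)
    (j : Fin d) (Gp G : Finset (Sigma × ℕ)) : ℝ :=
  ∑ q ∈ G, M.g j (x.drop k) k q.1 q.2 Gp

/-- `G` is an admissible attended set at layer `j` given the previous attended set
`Gp`: among all subsets of the positively-scored pairs of size at most `b`, it
maximizes the total score. -/
noncomputable def Admissible (M : MLBAPO Sigma Out a b d) (x : List Sigma) (k : ℕ)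
    (j : Fin d) (Gp G : Finset (Sigma × ℕ)) : Prop :=
  G ⊆ M.cands x k j Gp ∧ G.card ≤ b ∧
    ∀ G' : Finset (Sigma × ℕ), G' ⊆ M.cands x k j Gp → G'.card ≤ b →
      M.score x k j Gp G' ≤ M.score x k j Gp G

/-- `Gs` is an attended-set sequence: `Gs 0 = ∅` and each `Gs (j+1)` is admissible
at layer `j` given `Gs j`. -/
noncomputable def AttSeq (M : MLBAPO Sigma Out a b d) (x : List Sigma) (k : ℕ)
    (Gs : ℕ → Finset (Sigma × ℕ)) : Prop :=
  Gs 0 = ∅ ∧ ∀ j : Fin d, M.Admissible x k j (Gs j) (Gs (j + 1))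

/-- The multi-layer score-BAPO outputs `y` on input `x`: for every split index
`k < |x|` and every attended-set sequence `Gs`, the suffix oracle applied to the
last attended set `Gs d` outputs `y`. -/
noncomputable def SolvesOn (M : MLBAPO Sigma Out a b d) (x : List Sigma) (y : Out) :
    Prop :=
  ∀ k, k < x.length →
    ∀ Gs : ℕ → Finset (Sigma × ℕ), M.AttSeq x k Gs →
      M.h (M.f (x.take k)) (Gs d) (x.drop k) k = y

end MLBAPO

/-- One hop step (1-based indexing): `hopStep x t = max({0} ∪ {j ∈ [t] : x_{j-1} = x_t})`. -/
noncomputable def hopStep {Sigma : Type} (x : List Sigma) (t : ℕ) : ℕ :=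
  (Finset.range (t + 1)).sup fun j =>
    if 2 ≤ j ∧ j ≤ t ∧ x[j - 2]? = x[t - 1]? then j else 0

/-- Iterated hops: `hopIter x i` is `hop_i(x)` for `i ≥ 1`, so that
`hop₁(x) = max({0} ∪ {j ∈ [n] : x_{j-1} = x_n})` and
`hop_{i+1}(x) = max({0} ∪ {j ∈ [hop_i(x)] : x_{j-1} = x_{hop_i(x)}})`. -/
noncomputable def hopIter {Sigma : Type} (x : List Sigma) : ℕ → ℕ
  | 0 => x.length
  | i + 1 => hopStep x (hopIter x i)

/-!
Two layers make one hop. An even layer, queried with the pair `(x_t, t)`, gives every earlier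
occurrence `p < t` of `x_t` the score `p / (p + 1)`; these scores are positive and strictly
increasing, so the only optimal attended set of size one is the last occurrence, at position
`hop - 1`, and the attended set is empty if there is none. The next odd layer gives score `1`
exactly to the following position and so attends `(x_hop, hop)`, the query of the next hop.
Layer `0` takes its query, the last token, from the suffix, which is never empty.
-/

theorem head?_toList_toFinset {α : Type*} (o : Option α) : o.toFinset.toList.head? = o := by
  cases o <;> simp

theorem strictMono_div_add_one : StrictMono fun p : ℕ => (p : ℝ) / (p + 1) := by
  intro p q hpq
  have : (p : ℝ) < q := by exact_mod_cast hpq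
  simp only
  rw [div_lt_div_iff₀ (by positivity) (by positivity)]
  linarith

namespace MLBAPO

variable {S Out : Type} {a b d : ℕ} {x : List S} {k : ℕ} {j : Fin d} {Gp G : Finset (S × ℕ)}

theorem mk_mem_cands_iff (M : MLBAPO S Out a b d) {tok : S} {p : ℕ} :
    (tok, p) ∈ M.cands x k j Gp ↔
      p ≠ 0 ∧ x[p - 1]? = some tok ∧ 0 < M.g j (x.drop k) k tok p Gp := by
  simp only [cands, mem_image, mem_filter, mem_univ, true_and, Prod.mk.injEq]
  constructor
  · rintro ⟨i, hpos, rfl, rfl⟩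
    simpa using hpos
  · rintro ⟨hp, hx, hpos⟩
    obtain ⟨hlt, rfl⟩ := List.getElem?_eq_some_iff.1 hx
    exact ⟨⟨p - 1, hlt⟩, by simpa [Nat.sub_add_cancel (Nat.pos_of_ne_zero hp)] using hpos,
      rfl, Nat.sub_add_cancel (Nat.pos_of_ne_zero hp)⟩

theorem g_pos_of_mem_cands (M : MLBAPO S Out a b d) {q : S × ℕ} (hq : q ∈ M.cands x k j Gp) :
    0 < M.g j (x.drop k) k q.1 q.2 Gp :=
  (M.mk_mem_cands_iff.1 hq).2.2

theorem Admissible.eq_cands {M : MLBAPO S Out a b d} (h : M.Admissible x k j Gp G)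
    (hc : (M.cands x k j Gp).card ≤ b) : G = M.cands x k j Gp := by
  obtain ⟨hsub, -, hopt⟩ := h
  by_contra hne
  obtain ⟨q, hq, hqG⟩ := exists_of_ssubset (hsub.ssubset_of_ne hne)
  have hlt : M.score x k j Gp G < M.score x k j Gp (M.cands x k j Gp) :=
    sum_lt_sum_of_subset hsub hq hqG (M.g_pos_of_mem_cands hq)
      fun q _ _ => M.g_nonneg _ _ _ _ _ _
  exact (hopt _ subset_rfl hc).not_gt hlt

theorem Admissible.eq_singleton {M : MLBAPO S Out a 1 d} (h : M.Admissible x k j Gp G)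
    {q : S × ℕ} (hq : q ∈ M.cands x k j Gp)
    (hmax : ∀ q' ∈ M.cands x k j Gp, q' ≠ q →
      M.g j (x.drop k) k q'.1 q'.2 Gp < M.g j (x.drop k) k q.1 q.2 Gp) :
    G = {q} := by
  obtain ⟨hsub, hcard, hopt⟩ := h
  have : Nonempty (S × ℕ) := ⟨q⟩
  have hle := hopt {q} (singleton_subset_iff.2 hq) (card_singleton q).le
  obtain ⟨q', hq'⟩ := card_le_one_iff_subset_singleton.1 hcard
  rcases subset_singleton_iff.1 hq' with rfl | rfl
  · simp only [score, sum_singleton, sum_empty] at hle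
    exact absurd hle (M.g_pos_of_mem_cands hq).not_ge
  · obtain rfl | hne := eq_or_ne q' q
    · rfl
    simp only [score, sum_singleton] at hle
    exact absurd (hmax q' (hsub (mem_singleton_self q')) hne) hle.not_gt

end MLBAPO

section Hops

variable {S : Type} (x : List S)

theorem hopStep_le (t : ℕ) : hopStep x t ≤ t :=
  Finset.sup_le fun j _ => by split_ifs with h <;> omega

theorem le_hopStep {t j : ℕ} (hj : 2 ≤ j) (hjt : j ≤ t) (hx : x[j - 2]? = x[t - 1]?) :
    j ≤ hopStep x t := by
  have := le_sup (f := fun j => if 2 ≤ j ∧ j ≤ t ∧ x[j - 2]? = x[t - 1]? then j else 0)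
    (mem_range.2 (Nat.lt_succ_of_le hjt))
  simpa [hopStep, hj, hjt, hx] using this

theorem hopStep_spec {t : ℕ} (h : hopStep x t ≠ 0) :
    2 ≤ hopStep x t ∧ x[hopStep x t - 2]? = x[t - 1]? := by
  obtain ⟨j, -, hj⟩ := exists_mem_eq_sup (range (t + 1)) nonempty_range_add_one
    fun j => if 2 ≤ j ∧ j ≤ t ∧ x[j - 2]? = x[t - 1]? then j else 0
  rw [hopStep, hj] at h ⊢
  split_ifs at h ⊢ with hc
  · exact ⟨hc.1, hc.2.2⟩
  · exact absurd rfl h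

theorem hopIter_le_length (m : ℕ) : hopIter x m ≤ x.length := by
  induction m with
  | zero => exact le_rfl
  | succ m ih => exact (hopStep_le x _).trans ih

end Hops

section HopMachine

variable {S : Type}

/-- Positions are 1-based, as in attended sets; `none` unless `1 ≤ t ≤ x.length`. -/
def posToken (x : List S) (t : ℕ) : Option (S × ℕ) :=
  if t = 0 then none else x[t - 1]?.map (·, t)

theorem posToken_eq_some {x : List S} {t : ℕ} {q : S × ℕ} :
    posToken x t = some q ↔ t ≠ 0 ∧ x[t - 1]? = some q.1 ∧ q.2 = t := by
  obtain ⟨tok, p⟩ := q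
  unfold posToken
  split_ifs with ht
  · simp [ht]
  · simp [ht, eq_comm]

theorem posToken_map_fst (x : List S) (t : ℕ) :
    (posToken x t).map Prod.fst = if t = 0 then none else x[t - 1]? := by
  unfold posToken
  split_ifs <;> simp [Option.map_map, Function.comp_def]

theorem bind_posToken_sub_one {x : List S} {s : ℕ} (hs : s ≠ 1) :
    (posToken x (s - 1)).bind (fun q => posToken x (q.2 + 1)) = posToken x s := by
  rcases Nat.eq_zero_or_pos s with rfl | hs0
  · rfl
  simp only [posToken, if_neg (show s - 1 ≠ 0 by omega), if_neg hs0.ne']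
  cases hx : x[s - 1 - 1]? with
  | none => simp only [List.getElem?_eq_none_iff] at hx ⊢; simp; omega
  | some a => simp [Nat.sub_add_cancel hs0]

/-- Layer `0` queries the last input token, which lies in the suffix whatever the split;
every later layer queries the pair attended by the layer before it. -/
noncomputable def hopQuery (j : ℕ) (suf : List S) (k : ℕ) (Gp : Finset (S × ℕ)) :
    Option (S × ℕ) :=
  if j = 0 then suf.getLast?.map (·, k + suf.length) else Gp.toList.head?

theorem hopQuery_zero_drop {x : List S} {k : ℕ} (hk : k < x.length) (G : Finset (S × ℕ)) :
    hopQuery 0 (x.drop k) k G = posToken x x.length := by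
  simp [hopQuery, posToken, List.getLast?_eq_getElem?, (Nat.zero_le k).trans_lt hk |>.ne',
    Nat.add_sub_cancel' hk.le, show k + (x.length - k - 1) = x.length - 1 by omega]

theorem hopQuery_toFinset {j : ℕ} (hj : j ≠ 0) (suf : List S) (k : ℕ)
    (o : Option (S × ℕ)) : hopQuery j suf k o.toFinset = o := by
  rw [hopQuery, if_neg hj, head?_toList_toFinset]

noncomputable def hopScore (j : ℕ) (suf : List S) (k : ℕ) (tok : S) (p : ℕ)
    (Gp : Finset (S × ℕ)) : ℝ :=
  if j % 2 = 0 then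
    (hopQuery j suf k Gp).elim 0 fun q => if tok = q.1 ∧ p < q.2 then p / (p + 1) else 0
  else
    Gp.toList.head?.elim 0 fun q => if p = q.2 + 1 then 1 else 0

theorem hopScore_mem_Icc (j : ℕ) (suf : List S) (k : ℕ) (tok : S) (p : ℕ)
    (Gp : Finset (S × ℕ)) : hopScore j suf k tok p Gp ∈ Set.Icc 0 1 := by
  have hp : (p : ℝ) / (p + 1) ∈ Set.Icc 0 1 :=
    ⟨by positivity, div_le_one_of_le₀ (by linarith) (by positivity)⟩
  unfold hopScore
  split_ifs
  · cases hopQuery j suf k Gp <;> simp only [Option.elim] <;> try split_ifs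
    all_goals simp [hp]
  · cases Gp.toList.head? <;> simp only [Option.elim] <;> try split_ifs
    all_goals simp

/-- The suffix oracle outputs the token that a layer `dd` would query. -/
noncomputable def hopMachine (S : Type) (dd : ℕ) : MLBAPO S (Option S) 0 1 dd where
  f _ := Fin.elim0
  g j := hopScore j
  g_nonneg j suf k tok p Gp := (hopScore_mem_Icc j suf k tok p Gp).1
  g_le_one j suf k tok p Gp := (hopScore_mem_Icc j suf k tok p Gp).2
  h _ G suf k := (hopQuery dd suf k G).map Prod.fst

end HopMachine

section Layers

variable {S : Type} {dd : ℕ} {x : List S} {k : ℕ} {j : Fin dd} {Gp G : Finset (S × ℕ)}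

theorem hopMachine_cands_of_odd (hj : (j : ℕ) % 2 = 1) :
    (hopMachine S dd).cands x k j Gp =
      (Gp.toList.head?.bind fun q => posToken x (q.2 + 1)).toFinset := by
  ext ⟨tok, p⟩
  rw [MLBAPO.mk_mem_cands_iff]
  simp only [hopMachine, hopScore, hj, Nat.one_ne_zero, if_false]
  cases Gp.toList.head? with
  | none => simp
  | some q => by_cases hp : p = q.2 + 1 <;> simp [hp, posToken_eq_some, eq_comm]

theorem hopMachine_admissible_of_odd (hj : (j : ℕ) % 2 = 1)
    (h : (hopMachine S dd).Admissible x k j Gp G) :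
    G = (Gp.toList.head?.bind fun q => posToken x (q.2 + 1)).toFinset := by
  refine (h.eq_cands ?_).trans (hopMachine_cands_of_odd hj)
  rw [hopMachine_cands_of_odd hj, Option.card_toFinset]
  cases Gp.toList.head?.bind fun q => posToken x (q.2 + 1) <;> simp

theorem hopMachine_g_of_even (hj : (j : ℕ) % 2 = 0) {τ : S} {t : ℕ}
    (hq : hopQuery j (x.drop k) k Gp = some (τ, t)) (tok : S) (p : ℕ) :
    (hopMachine S dd).g j (x.drop k) k tok p Gp =
      if tok = τ ∧ p < t then (p : ℝ) / (p + 1) else 0 := by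
  simp only [hopMachine, hopScore, hj, if_true, hq, Option.elim]

theorem hopMachine_mk_mem_cands_of_even (hj : (j : ℕ) % 2 = 0) {t : ℕ}
    (hq : hopQuery j (x.drop k) k Gp = posToken x t) {tok : S} {p : ℕ} :
    (tok, p) ∈ (hopMachine S dd).cands x k j Gp ↔
      p ≠ 0 ∧ p < t ∧ x[p - 1]? = some tok ∧ x[t - 1]? = some tok := by
  rw [MLBAPO.mk_mem_cands_iff]
  cases ht : posToken x t with
  | none =>
    simp only [hopMachine, hopScore, hj, if_true, hq, ht, Option.elim, lt_irrefl, and_false,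
      false_iff]
    simp only [posToken, ite_eq_left_iff, Option.map_eq_none_iff] at ht
    rintro ⟨hp, hpt, -, hxt⟩
    simp [ht (by omega)] at hxt
  | some q =>
    obtain ⟨τ, t⟩ := q
    obtain ⟨-, hxt, rfl⟩ := posToken_eq_some.1 ht
    rw [hopMachine_g_of_even hj (hq.trans ht)]
    have : (0 : ℝ) < p / (p + 1) ↔ p ≠ 0 := by
      rw [div_pos_iff_of_pos_right (by positivity)]; simp [Nat.pos_iff_ne_zero]
    by_cases hc : tok = τ ∧ p < t
    · obtain ⟨rfl, hpt⟩ := hc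
      simp only at hxt
      simp only [hpt, hxt, this, and_self, if_true, true_and]
      tauto
    · simp only [if_neg hc, lt_irrefl, and_false, false_iff]
      rintro ⟨-, hpt, -, h⟩
      exact hc ⟨Option.some_injective _ (h.symm.trans hxt), hpt⟩

theorem hopMachine_admissible_of_even (hj : (j : ℕ) % 2 = 0) {t : ℕ}
    (hq : hopQuery j (x.drop k) k Gp = posToken x t) (ht : t ≤ x.length)
    (h : (hopMachine S dd).Admissible x k j Gp G) :
    G = (posToken x (hopStep x t - 1)).toFinset := by
  have hmem {tok : S} {p : ℕ} := hopMachine_mk_mem_cands_of_even (tok := tok) (p := p) hj hq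
  have hle : ∀ {tok : S} {p : ℕ}, (tok, p) ∈ (hopMachine S dd).cands x k j Gp →
      p + 1 ≤ hopStep x t := fun {tok p} hm => by
    obtain ⟨hp, hpt, hxp, hxt⟩ := hmem.1 hm
    exact le_hopStep x (by omega) hpt (by rw [show p + 1 - 2 = p - 1 by omega, hxp, hxt])
  by_cases h0 : hopStep x t = 0
  · have hc : (hopMachine S dd).cands x k j Gp = ∅ :=
      eq_empty_of_forall_notMem fun q hm => by have := hle hm; omega
    rw [h.eq_cands (by simp [hc]), hc, h0]
    rfl
  obtain ⟨h2, hx⟩ := hopStep_spec x h0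
  have hs := hopStep_le x t
  obtain ⟨τ, hτ⟩ : ∃ τ, x[t - 1]? = some τ := Option.isSome_iff_exists.1 (by simp; omega)
  have hq₀ : posToken x (hopStep x t - 1) = some (τ, hopStep x t - 1) :=
    posToken_eq_some.2 ⟨by omega, by rw [Nat.sub_sub, hx, hτ], rfl⟩
  rw [hq₀, Option.toFinset_some]
  refine h.eq_singleton (hmem.2 ⟨by omega, by omega, by rw [Nat.sub_sub, hx, hτ], hτ⟩) ?_
  rintro ⟨tok, p⟩ hm hne
  have hp := hle hm
  obtain ⟨-, -, -, hxt⟩ := hmem.1 hm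
  have htok : tok = τ := Option.some_injective _ (hxt.symm.trans hτ)
  have hlt : p < hopStep x t - 1 := by
    refine lt_of_le_of_ne (by omega) fun hp' => hne ?_
    rw [htok, hp']
  have hq' := hq.trans ((posToken_eq_some (q := (τ, t))).2 ⟨by omega, hτ, rfl⟩)
  rw [hopMachine_g_of_even hj hq', hopMachine_g_of_even hj hq',
    if_pos ⟨htok, by omega⟩, if_pos ⟨rfl, by omega⟩]
  exact strictMono_div_add_one hlt

end Layers

section Solution

variable {S : Type} {dd : ℕ} {x : List S} {k : ℕ} {Gs : ℕ → Finset (S × ℕ)}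

theorem hopQuery_two_mul_add_two (h : (hopMachine S dd).AttSeq x k Gs) {m t : ℕ}
    (hm : 2 * m + 1 < dd) (ht : t ≤ x.length)
    (hq : hopQuery (2 * m) (x.drop k) k (Gs (2 * m)) = posToken x t) :
    hopQuery (2 * m + 2) (x.drop k) k (Gs (2 * m + 2)) = posToken x (hopStep x t) := by
  have h1 := hopMachine_admissible_of_even (j := ⟨2 * m, by omega⟩) (G := Gs (2 * m + 1))
    (by simp) hq ht (h.2 ⟨2 * m, by omega⟩)
  have h2 := hopMachine_admissible_of_odd (j := ⟨2 * m + 1, hm⟩) (Gp := Gs (2 * m + 1))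
    (G := Gs (2 * m + 2)) (by simp) (h.2 ⟨2 * m + 1, hm⟩)
  have hs : hopStep x t ≠ 1 := fun hs => by
    have := (hopStep_spec x (t := t) (by omega)).1
    omega
  rw [h2, h1, head?_toList_toFinset, bind_posToken_sub_one hs, hopQuery_toFinset (by omega) _ _ _]

theorem hopQuery_eq_posToken_hopIter (h : (hopMachine S dd).AttSeq x k Gs) (hk : k < x.length)
    {m : ℕ} (hm : 2 * m ≤ dd) :
    hopQuery (2 * m) (x.drop k) k (Gs (2 * m)) = posToken x (hopIter x m) := by
  induction m with
  | zero => exact hopQuery_zero_drop hk _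
  | succ m ih =>
    exact hopQuery_two_mul_add_two h (by omega) (hopIter_le_length x m) (ih (by omega))

end Solution

theorem induction_heads_mlbapo_general (d : ℕ) (Sigma : Type) :
    ∃ M : MLBAPO Sigma (Option Sigma) 0 1 (2 * d),
      ∀ x : List Sigma,
        M.SolvesOn x (if hopIter x d = 0 then none else x[hopIter x d - 1]?) := by
  refine ⟨hopMachine Sigma (2 * d), fun x k hk Gs h => ?_⟩
  show (hopQuery (2 * d) (x.drop k) k (Gs (2 * d))).map Prod.fst = _
  rw [hopQuery_eq_posToken_hopIter h hk le_rfl, posToken_map_fst]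

/-- **d-Hop Induction Heads is solvable by a `(0,1)`-2d-layer full-attention
score-BAPO.** For every `d ≥ 1` and every alphabet, there is a multi-layer
full-attention score-BAPO with prefix bandwidth `0`, attention bandwidth `1`, and
`2d` layers that outputs the token `x_{hop_d(x)}` if `hop_d(x) ≠ 0` and the special
token `⊥` (here `none`) otherwise. -/
theorem induction_heads_mlbapo (d : ℕ) (hd : 1 ≤ d) (Sigma : Type) :
    ∃ M : MLBAPO Sigma (Option Sigma) 0 1 (2 * d),
      ∀ x : List Sigma,
        M.SolvesOn x (if hopIter x d = 0 then none else x[hopIter x d - 1]?) :=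
  induction_heads_mlbapo_general d Sigma
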